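/- Let M be a symmetric matrix over GF(2) of block form [[1,0,𝟏,𝟎],[0,1,𝟏,𝟎],[𝟏,𝟏,A,B],[𝟎,𝟎,Bᵀ,C]], i.e., two extra indices each with diagonal entry 1, not adjacent to each other, both adjacent to exactly the indices of the first block. Then ν(M) = ν([[A,B],[Bᵀ,C]]). -/

import Mathlib

/-!
Since the top-left block is the identity, block elimination gives
`rank M = 2 + rank (N - Bᵀ B)`, where `B` is the block of the two loop rows and `N` the
remaining principal submatrix. The two rows of `B` coincide, so `Bᵀ B` is twice a matrix,
hence zero over GF(2).
-/

/-- The GF(2)-nullity of a square matrix: the dimension of its kernel,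
computed by rank–nullity. -/
noncomputable def nullity {n : Type} [Fintype n] (M : Matrix n n (ZMod 2)) : ℕ :=
  Fintype.card n - M.rank

open Matrix Module

section BlockRank

variable {K : Type*} [Field K]

theorem Submodule.finrank_prod {V W : Type*} [AddCommGroup V] [AddCommGroup W] [Module K V]
    [Module K W] [FiniteDimensional K V] [FiniteDimensional K W]
    (p : Submodule K V) (q : Submodule K W) :
    finrank K (p.prod q) = finrank K p + finrank K q := by
  have hinj : Function.Injective (p.subtype.prodMap q.subtype) :=
    p.injective_subtype.prodMap q.injective_subtype
  rw [← Module.finrank_prod, ← LinearMap.finrank_range_of_inj hinj, LinearMap.range_prodMap,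
    Submodule.range_subtype, Submodule.range_subtype]

variable {m n l o : Type*} [Fintype m] [Fintype n] [Fintype l] [Fintype o]

theorem Matrix.rank_fromBlocks_zero (A : Matrix m n K) (D : Matrix l o K) :
    (fromBlocks A 0 0 D).rank = A.rank + D.rank := by
  let eDom := LinearEquiv.sumArrowLequivProdArrow n o K K
  let eCod := LinearEquiv.sumArrowLequivProdArrow m l K K
  have hconj : (fromBlocks A 0 0 D).mulVecLin =
      eCod.symm.toLinearMap ∘ₗ A.mulVecLin.prodMap D.mulVecLin ∘ₗ eDom.toLinearMap := by
    ext v i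
    cases i <;> simp [eDom, eCod, fromBlocks_mulVec] <;> rfl
  rw [rank, hconj, LinearMap.range_comp, LinearMap.range_comp_of_range_eq_top _ eDom.range,
    LinearEquiv.finrank_map_eq, LinearMap.range_prodMap, Submodule.finrank_prod, rank, rank]

theorem Matrix.rank_fromBlocks_one₁₁ [DecidableEq m] [DecidableEq l] (B : Matrix m l K)
    (C : Matrix l m K) (D : Matrix l l K) :
    (fromBlocks 1 B C D).rank = Fintype.card m + (D - C * B).rank := by
  let : Invertible (1 : Matrix m m K) := invertibleOne
  have hU : IsUnit (fromBlocks 1 (⅟(1 : Matrix m m K) * B) 0 (1 : Matrix l l K)).det := by simp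
  have hL : IsUnit (fromBlocks (1 : Matrix m m K) 0 (C * ⅟(1 : Matrix m m K)) 1).det := by simp
  rw [fromBlocks_eq_of_invertible₁₁, rank_mul_eq_left_of_isUnit_det _ _ hU,
    rank_mul_eq_right_of_isUnit_det _ _ hL, rank_fromBlocks_zero, rank_one, invOf_one,
    Matrix.mul_one]

end BlockRank

theorem Matrix.transpose_mul_self_eq_zero_of_row_eq {R n : Type*} [CommRing R] [CharP R 2]
    [Fintype n] {B : Matrix (Fin 2) n R} (h : B 0 = B 1) : Bᵀ * B = 0 := by
  ext i j
  simp [mul_apply, Fin.sum_univ_two, h, CharTwo.add_self_eq_zero]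

theorem nullity_fromBlocks_one₁₁ {m l : Type} [Fintype m] [Fintype l] [DecidableEq m]
    [DecidableEq l] (B : Matrix m l (ZMod 2)) (C : Matrix l m (ZMod 2)) (D : Matrix l l (ZMod 2)) :
    nullity (fromBlocks 1 B C D) = nullity (D - C * B) := by
  rw [nullity, nullity, rank_fromBlocks_one₁₁, Fintype.card_sum, Nat.add_sub_add_left]

/-- for symmetric `M = [[1,0,𝟏,𝟎],[0,1,𝟏,𝟎],[𝟏,𝟏,A,B],[𝟎,𝟎,Bᵀ,C]]`
over GF(2) (two extra indices with diagonal entry 1, not adjacent to each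
other, both adjacent to exactly the `α` block), the nullity equals that of
`[[A,B],[Bᵀ,C]]`. -/
theorem nullity_two_loops {α β : Type} [Fintype α] [Fintype β]
    (M : Matrix (Fin 2 ⊕ α ⊕ β) (Fin 2 ⊕ α ⊕ β) (ZMod 2)) (hM : M.IsSymm)
    (hdiag : ∀ i j : Fin 2, M (Sum.inl i) (Sum.inl j) = if i = j then 1 else 0)
    (h0a : ∀ (i : Fin 2) (a : α), M (Sum.inl i) (Sum.inr (Sum.inl a)) = 1)
    (h0b : ∀ (i : Fin 2) (b : β), M (Sum.inl i) (Sum.inr (Sum.inr b)) = 0) :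
    nullity M = nullity (M.submatrix Sum.inr Sum.inr) := by
  classical
  set B := M.toBlocks₁₂
  have hA : M.toBlocks₁₁ = 1 := by
    ext i j
    simp [toBlocks₁₁, hdiag, one_apply]
  have hC : M.toBlocks₂₁ = Bᵀ := by
    ext i j
    exact hM.apply (Sum.inl j) (Sum.inr i)
  have hB : B 0 = B 1 := by
    ext (a | b) <;> simp [B, toBlocks₁₂, h0a, h0b]
  calc nullity M = nullity (fromBlocks 1 B Bᵀ M.toBlocks₂₂) := by
        rw [← hA, ← hC, fromBlocks_toBlocks]
    _ = nullity (M.toBlocks₂₂ - Bᵀ * B) := nullity_fromBlocks_one₁₁ _ _ _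
    _ = nullity (M.submatrix Sum.inr Sum.inr) := by
        rw [transpose_mul_self_eq_zero_of_row_eq hB, sub_zero]
        rfl
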